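/- arXiv:2505.00785 — 4 statements merged into one kernel-verified Lean document; each statement's English description precedes it below -/
import Mathlib

section
/- Under the same setup, MSC(X,Y) ≤ min{a,b} − 1. Moreover (assuming without loss of generality a ≥ b), equality MSC(X,Y) = b − 1 holds if and only if for every i there exists some j with p_{ij} = p_{i·}, i.e., each row of the contingency table contains exactly one nonzero entry. -/
/-!
Writing `q = p_{i·} p_{·j}`, the identity `∑ (p - q)² / q = ∑ p² / q - 1` reduces the
claim to bounds on `S = ∑ p_{ij}² / (p_{i·} p_{·j})`. Since `p_{ij} ≤ p_{i·}`, each term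
of `S` is at most `p_{ij} / p_{·j}`, and these sum to `b`, with equality in a term iff
`p_{ij} ∈ {0, p_{i·}}`; symmetrically `S ≤ a`.
-/

open Finset

lemma sum_sq_sub_div_eq_sum_sq_div_sub_one {α : Type*} [Fintype α] (p q : α → ℝ)
    (hq : ∀ x, q x ≠ 0) (hp1 : ∑ x, p x = 1) (hq1 : ∑ x, q x = 1) :
    ∑ x, (p x - q x) ^ 2 / q x = ∑ x, p x ^ 2 / q x - 1 := by
  have hterm : ∀ x, (p x - q x) ^ 2 / q x = p x ^ 2 / q x - 2 * p x + q x := fun x => by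
    field_simp [hq x]
    ring
  simp only [hterm, sum_add_distrib, sum_sub_distrib, ← mul_sum, hp1, hq1]
  ring

lemma sq_div_mul_eq_div_mul_div (p r c : ℝ) : p ^ 2 / (r * c) = p / r * (p / c) := by
  rw [sq, mul_div_mul_comm]

lemma sq_div_mul_le_div {p r c : ℝ} (hp : 0 ≤ p) (hpr : p ≤ r) (hc : 0 ≤ c) :
    p ^ 2 / (r * c) ≤ p / c := by
  rw [sq_div_mul_eq_div_mul_div]
  exact mul_le_of_le_one_left (div_nonneg hp hc) (div_le_one_of_le₀ hpr (hp.trans hpr))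

lemma sq_div_mul_eq_div_iff {p r c : ℝ} (hr : r ≠ 0) (hc : c ≠ 0) :
    p ^ 2 / (r * c) = p / c ↔ p = 0 ∨ p = r := by
  rw [sq_div_mul_eq_div_mul_div]
  by_cases hp : p = 0
  · simp [hp]
  · rw [mul_eq_right₀ (div_ne_zero hp hc), div_eq_one_iff_eq hr]
    simp [hp]

lemma forall_eq_zero_or_eq_sum_iff_exists {κ : Type*} [Fintype κ] {q : κ → ℝ}
    (hq : ∀ j, 0 ≤ q j) (hsum : ∑ j, q j ≠ 0) :
    (∀ j, q j = 0 ∨ q j = ∑ k, q k) ↔ ∃ j, q j = ∑ k, q k := by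
  classical
  constructor
  · intro h
    by_contra! hne
    exact hsum (sum_eq_zero fun j _ => (h j).resolve_right (hne j))
  · rintro ⟨j₀, hj₀⟩ j
    by_cases hj : j = j₀
    · exact Or.inr (hj ▸ hj₀)
    · have hrest : ∑ k ∈ univ.erase j₀, q k = 0 := by
        linarith [add_sum_erase univ q (mem_univ j₀)]
      exact Or.inl <| (sum_eq_zero_iff_of_nonneg fun k _ => hq k).mp hrest j
        (mem_erase.mpr ⟨hj, mem_univ j⟩)

section ContingencyTable

variable {ι κ : Type*} [Fintype κ] {p : ι → κ → ℝ} {r : ι → ℝ} {c : κ → ℝ}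

lemma sum_sum_div_colSum_eq_card [Fintype ι] (hc : ∀ j, c j = ∑ i, p i j)
    (hc0 : ∀ j, c j ≠ 0) :
    ∑ i, ∑ j, p i j / c j = Fintype.card κ := by
  rw [sum_comm]
  simp [← sum_div, ← hc, div_self (hc0 _)]

lemma sum_sum_sq_sub_mul_div_eq [Fintype ι] (hsum : ∑ i, ∑ j, p i j = 1)
    (hr : ∀ i, r i = ∑ j, p i j) (hc : ∀ j, c j = ∑ i, p i j) (hr0 : ∀ i, r i ≠ 0)
    (hc0 : ∀ j, c j ≠ 0) :
    ∑ i, ∑ j, (p i j - r i * c j) ^ 2 / (r i * c j) =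
      ∑ i, ∑ j, p i j ^ 2 / (r i * c j) - 1 := by
  have hprod : ∑ i, ∑ j, r i * c j = 1 := by
    rw [← sum_mul_sum, funext hr, funext hc, hsum, sum_comm, hsum, one_mul]
  simpa only [← univ_product_univ, sum_product] using sum_sq_sub_div_eq_sum_sq_div_sub_one
    (fun x : ι × κ => p x.1 x.2) (fun x => r x.1 * c x.2)
    (fun x => mul_ne_zero (hr0 x.1) (hc0 x.2))
    (by simpa only [← univ_product_univ, sum_product] using hsum)
    (by simpa only [← univ_product_univ, sum_product] using hprod)

lemma sq_div_mul_le_div_colSum (hp : ∀ i j, 0 ≤ p i j) (hr : ∀ i, r i = ∑ j, p i j)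
    (hc : ∀ j, 0 ≤ c j) (i : ι) (j : κ) : p i j ^ 2 / (r i * c j) ≤ p i j / c j := by
  refine sq_div_mul_le_div (hp i j) ?_ (hc j)
  rw [hr]
  exact single_le_sum (fun k _ => hp i k) (mem_univ j)

lemma sum_sum_sq_div_le_card [Fintype ι] (hp : ∀ i j, 0 ≤ p i j)
    (hr : ∀ i, r i = ∑ j, p i j) (hc : ∀ j, c j = ∑ i, p i j) (hcpos : ∀ j, 0 < c j) :
    ∑ i, ∑ j, p i j ^ 2 / (r i * c j) ≤ Fintype.card κ := by
  rw [← sum_sum_div_colSum_eq_card hc fun j => (hcpos j).ne']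
  exact sum_le_sum fun i _ => sum_le_sum fun j _ =>
    sq_div_mul_le_div_colSum hp hr (fun j => (hcpos j).le) i j

lemma sum_sum_sq_div_eq_card_iff [Fintype ι] (hp : ∀ i j, 0 ≤ p i j)
    (hr : ∀ i, r i = ∑ j, p i j) (hc : ∀ j, c j = ∑ i, p i j)
    (hrpos : ∀ i, 0 < r i) (hcpos : ∀ j, 0 < c j) :
    ∑ i, ∑ j, p i j ^ 2 / (r i * c j) = Fintype.card κ ↔
      ∀ i j, p i j = 0 ∨ p i j = r i := by
  rw [← sum_sum_div_colSum_eq_card hc fun j => (hcpos j).ne', ← Fintype.sum_prod_type',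
    ← Fintype.sum_prod_type', sum_eq_sum_iff_of_le fun x _ =>
      sq_div_mul_le_div_colSum hp hr (fun j => (hcpos j).le) x.1 x.2]
  simp only [mem_univ, true_implies, Prod.forall,
    sq_div_mul_eq_div_iff (hrpos _).ne' (hcpos _).ne']

end ContingencyTable

theorem MSC_attainability_general (a b : ℕ)
    (p : Fin a → Fin b → ℝ) (hp : ∀ i j, 0 ≤ p i j)
    (hsum : ∑ i, ∑ j, p i j = 1)
    (pr : Fin a → ℝ) (hpr : ∀ i, pr i = ∑ j, p i j) (hprpos : ∀ i, 0 < pr i)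
    (pc : Fin b → ℝ) (hpc : ∀ j, pc j = ∑ i, p i j) (hpcpos : ∀ j, 0 < pc j) :
    (∑ i, ∑ j, (p i j - pr i * pc j) ^ 2 / (pr i * pc j) ≤ ((min a b : ℕ) : ℝ) - 1)
    ∧ (b ≤ a →
        ((∑ i, ∑ j, (p i j - pr i * pc j) ^ 2 / (pr i * pc j) = (b : ℝ) - 1)
          ↔ (∀ i, ∃ j, p i j = pr i))) := by
  have hMSC := sum_sum_sq_sub_mul_div_eq hsum hpr hpc (fun i => (hprpos i).ne')
    fun j => (hpcpos j).ne'
  have hle_b := sum_sum_sq_div_le_card hp hpr hpc hpcpos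
  have hle_a :=
    sum_sum_sq_div_le_card (p := fun j i => p i j) (fun j i => hp i j) hpc hpr hprpos
  rw [sum_comm] at hle_a
  simp only [mul_comm (pc _), Fintype.card_fin] at hle_a hle_b
  refine ⟨?_, fun _ => ?_⟩
  · rw [hMSC, Nat.cast_min]
    exact sub_le_sub_right (le_min hle_a hle_b) 1
  · have hrows := sum_sum_sq_div_eq_card_iff hp hpr hpc hprpos hpcpos
    rw [Fintype.card_fin] at hrows
    rw [hMSC, sub_left_inj, hrows]
    refine forall_congr' fun i => ?_
    rw [hpr i]
    exact forall_eq_zero_or_eq_sum_iff_exists (hp i) (hpr i ▸ (hprpos i).ne')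

/-- MSC(X,Y) ≤ min{a,b} − 1, and (for a ≥ b) equality holds iff every
row of the contingency table has a single nonzero entry, i.e. ∀ i ∃ j, p_{ij} = p_{i·}. -/
theorem MSC_attainability (a b : ℕ) (ha : 0 < a) (hb : 0 < b)
    (p : Fin a → Fin b → ℝ) (hp : ∀ i j, 0 ≤ p i j)
    (hsum : ∑ i, ∑ j, p i j = 1)
    (pr : Fin a → ℝ) (hpr : ∀ i, pr i = ∑ j, p i j) (hprpos : ∀ i, 0 < pr i)
    (pc : Fin b → ℝ) (hpc : ∀ j, pc j = ∑ i, p i j) (hpcpos : ∀ j, 0 < pc j) :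
    (∑ i, ∑ j, (p i j - pr i * pc j) ^ 2 / (pr i * pc j) ≤ ((min a b : ℕ) : ℝ) - 1)
    ∧ (b ≤ a →
        ((∑ i, ∑ j, (p i j - pr i * pc j) ^ 2 / (pr i * pc j) = (b : ℝ) - 1)
          ↔ (∀ i, ∃ j, p i j = pr i))) :=
  MSC_attainability_general a b p hp hsum pr hpr hprpos pc hpc hpcpos
end

section
/- For binary random variables X, Y taking values in {0,1}, Kendall's tau satisfies τ^K(X,Y) = 2(P(X=1, Y=1) − P(X=1)P(Y=1)). Consequently, τ^K(X,Y) = 0 if and only if X and Y are independent. -/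
/-!
Since `X` and `Y` take values in `{0, 1}`, the product `D = (X - X̃)(Y - Ỹ)` takes values in
`{-1, 0, 1}`, so `τ = P(D > 0) - P(D < 0)` is the expectation of `D`. Expanding `D` and using the
independence of the two copies, `E[D] = 2 (E[XY] - E[X] E[Y])`, and for indicator variables
`E[XY] = P(X = 1, Y = 1)` and `E[X] = P(X = 1)`. Finally, `X` and `Y` are the indicators of the
events `{X = 1}` and `{Y = 1}`, which generate their σ-algebras, so `X` and `Y` are independent
exactly when these two events are.
-/

open MeasureTheory

theorem mul_eq_zero_or_one {M : Type*} [MulZeroOneClass M] {x y : M} (hx : x = 0 ∨ x = 1)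
    (hy : y = 0 ∨ y = 1) : x * y = 0 ∨ x * y = 1 := by
  rcases hx with rfl | rfl <;> simp [hy]

theorem sub_mul_sub_of_binary {x x' y y' : ℝ} (hx : x = 0 ∨ x = 1) (hx' : x' = 0 ∨ x' = 1)
    (hy : y = 0 ∨ y = 1) (hy' : y' = 0 ∨ y' = 1) :
    (x - x') * (y - y') = -1 ∨ (x - x') * (y - y') = 0 ∨ (x - x') * (y - y') = 1 := by
  rcases hx with rfl | rfl <;> rcases hx' with rfl | rfl <;> rcases hy with rfl | rfl <;>
    rcases hy' with rfl | rfl <;> norm_num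

theorem measureReal_pos_sub_measureReal_neg_eq_integral {α : Type*} [MeasurableSpace α]
    {ν : Measure α} [IsFiniteMeasure ν] {f : α → ℝ} (hf : Measurable f)
    (hf_sign : ∀ a, f a = -1 ∨ f a = 0 ∨ f a = 1) :
    ν.real {a | 0 < f a} - ν.real {a | f a < 0} = ∫ a, f a ∂ν := by
  have hpos : MeasurableSet {a | 0 < f a} := measurableSet_lt measurable_const hf
  have hneg : MeasurableSet {a | f a < 0} := measurableSet_lt hf measurable_const
  have hf_eq : f = {a | 0 < f a}.indicator 1 - {a | f a < 0}.indicator 1 := by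
    ext a
    rcases hf_sign a with h | h | h <;> simp [h]
  conv_rhs => rw [hf_eq]
  rw [integral_sub' ((integrable_const 1).indicator hpos) ((integrable_const 1).indicator hneg),
    integral_indicator_one hpos, integral_indicator_one hneg]

theorem integral_sub_mul_sub_prod {Ω : Type*} [MeasurableSpace Ω] {μ : Measure Ω}
    [IsProbabilityMeasure μ] {X Y : Ω → ℝ} (hX : Integrable X μ) (hY : Integrable Y μ)
    (hXY : Integrable (fun ω ↦ X ω * Y ω) μ) :
    ∫ q, (X q.1 - X q.2) * (Y q.1 - Y q.2) ∂(μ.prod μ)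
      = 2 * (∫ ω, X ω * Y ω ∂μ - (∫ ω, X ω ∂μ) * ∫ ω, Y ω ∂μ) := by
  have h11 : Integrable (fun q : Ω × Ω ↦ X q.1 * Y q.1) (μ.prod μ) := hXY.comp_fst μ
  have h22 : Integrable (fun q : Ω × Ω ↦ X q.2 * Y q.2) (μ.prod μ) := hXY.comp_snd μ
  have h12 : Integrable (fun q : Ω × Ω ↦ X q.1 * Y q.2) (μ.prod μ) := hX.mul_prod hY
  have h21 : Integrable (fun q : Ω × Ω ↦ X q.2 * Y q.1) (μ.prod μ) := by
    simpa only [mul_comm] using hY.mul_prod hX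
  have h1 : Integrable (fun q : Ω × Ω ↦ X q.1 * Y q.1 - X q.1 * Y q.2) (μ.prod μ) :=
    h11.sub h12
  have h2 : Integrable (fun q : Ω × Ω ↦ X q.2 * Y q.1 - X q.2 * Y q.2) (μ.prod μ) :=
    h21.sub h22
  have hcross : ∫ q, X q.2 * Y q.1 ∂(μ.prod μ) = (∫ ω, X ω ∂μ) * ∫ ω, Y ω ∂μ := by
    simp_rw [mul_comm (X _)]
    rw [integral_prod_mul, mul_comm]
  have hexpand : ∀ q : Ω × Ω, (X q.1 - X q.2) * (Y q.1 - Y q.2)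
      = X q.1 * Y q.1 - X q.1 * Y q.2 - (X q.2 * Y q.1 - X q.2 * Y q.2) := fun q ↦ by ring
  simp_rw [hexpand]
  rw [integral_sub h1 h2, integral_sub h11 h12, integral_sub h21 h22,
    integral_fun_fst (fun ω ↦ X ω * Y ω), integral_fun_snd (fun ω ↦ X ω * Y ω),
    integral_prod_mul X Y, hcross, probReal_univ, one_smul]
  ring

theorem ProbabilityTheory.IndepSet.indepFun_indicator {Ω M N : Type*} {_ : MeasurableSpace Ω}
    {μ : Measure Ω} [Zero M] [MeasurableSpace M] [Zero N] [MeasurableSpace N]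
    {A B : Set Ω} (h : IndepSet A B μ) (c : M) (d : N) :
    IndepFun (A.indicator fun _ ↦ c) (B.indicator fun _ ↦ d) μ := by
  rw [IndepSet_iff_Indep] at h
  rw [IndepFun_iff_Indep]
  exact indep_of_indep_of_le_right
    (indep_of_indep_of_le_left h
      (MeasurableSpace.comap_indicator_const_le_generateFrom_singleton A c))
    (MeasurableSpace.comap_indicator_const_le_generateFrom_singleton B d)

section Binary

open ProbabilityTheory

variable {Ω : Type*} {X Y : Ω → ℝ}

theorem eq_indicator_of_binary (hX : ∀ ω, X ω = 0 ∨ X ω = 1) :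
    X = {ω | X ω = 1}.indicator 1 := by
  ext ω
  rcases hX ω with h | h <;> simp [h]

variable [MeasurableSpace Ω] {μ : Measure Ω}

theorem integrable_of_binary [IsFiniteMeasure μ] (hXm : Measurable X)
    (hX : ∀ ω, X ω = 0 ∨ X ω = 1) : Integrable X μ :=
  .of_bound hXm.aestronglyMeasurable 1 (.of_forall fun ω ↦ by rcases hX ω with h | h <;> simp [h])

theorem integral_eq_measureReal_of_binary (hXm : Measurable X) (hX : ∀ ω, X ω = 0 ∨ X ω = 1) :
    ∫ ω, X ω ∂μ = μ.real {ω | X ω = 1} := by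
  calc ∫ ω, X ω ∂μ = ∫ ω, {ω | X ω = 1}.indicator 1 ω ∂μ :=
        congrArg (fun f ↦ ∫ ω, f ω ∂μ) (eq_indicator_of_binary hX)
    _ = μ.real {ω | X ω = 1} := integral_indicator_one (hXm (measurableSet_singleton 1))

theorem integral_mul_eq_measureReal_of_binary (hXm : Measurable X) (hYm : Measurable Y)
    (hX : ∀ ω, X ω = 0 ∨ X ω = 1) (hY : ∀ ω, Y ω = 0 ∨ Y ω = 1) :
    ∫ ω, X ω * Y ω ∂μ = μ.real {ω | X ω = 1 ∧ Y ω = 1} := by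
  rw [integral_eq_measureReal_of_binary (X := fun ω ↦ X ω * Y ω) (hXm.mul hYm)
    fun ω ↦ mul_eq_zero_or_one (hX ω) (hY ω)]
  congr 1
  ext ω
  rcases hX ω with h | h <;> simp [h]

theorem indepFun_iff_measure_inter_eq_mul_of_binary [IsProbabilityMeasure μ]
    (hXm : Measurable X) (hYm : Measurable Y)
    (hX : ∀ ω, X ω = 0 ∨ X ω = 1) (hY : ∀ ω, Y ω = 0 ∨ Y ω = 1) :
    IndepFun X Y μ ↔ μ {ω | X ω = 1 ∧ Y ω = 1} = μ {ω | X ω = 1} * μ {ω | Y ω = 1} := by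
  refine ⟨fun h ↦ h.measure_inter_preimage_eq_mul _ _ (measurableSet_singleton 1)
    (measurableSet_singleton 1), fun h ↦ ?_⟩
  have hA : MeasurableSet {ω | X ω = 1} := hXm (measurableSet_singleton 1)
  have hB : MeasurableSet {ω | Y ω = 1} := hYm (measurableSet_singleton 1)
  rw [eq_indicator_of_binary hX, eq_indicator_of_binary hY]
  exact ((indepSet_iff_measure_inter_eq_mul hA hB μ).2 h).indepFun_indicator 1 1

end Binary

/-- For binary X, Y (values in {0,1}), Kendall's tau equals
2(P(X=1,Y=1) − P(X=1)P(Y=1)); consequently τ = 0 iff X and Y are independent. -/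
theorem kendall_tau_binary
    {Ω : Type*} [MeasurableSpace Ω] (ℙ : Measure Ω) [IsProbabilityMeasure ℙ]
    (X Y : Ω → ℝ) (hX : Measurable X) (hY : Measurable Y)
    (hXbin : ∀ ω, X ω = 0 ∨ X ω = 1) (hYbin : ∀ ω, Y ω = 0 ∨ Y ω = 1)
    (D : Ω × Ω → ℝ) (hD : ∀ q, D q = (X q.1 - X q.2) * (Y q.1 - Y q.2))
    (τ : ℝ)
    (hτ : τ = ((ℙ.prod ℙ) {q | 0 < D q}).toReal - ((ℙ.prod ℙ) {q | D q < 0}).toReal) :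
    τ = 2 * ((ℙ {ω | X ω = 1 ∧ Y ω = 1}).toReal
          - (ℙ {ω | X ω = 1}).toReal * (ℙ {ω | Y ω = 1}).toReal)
    ∧ (τ = 0 ↔ ProbabilityTheory.IndepFun X Y ℙ) := by
  have hD_eq : D = fun q ↦ (X q.1 - X q.2) * (Y q.1 - Y q.2) := funext hD
  have hD_sign : ∀ q, D q = -1 ∨ D q = 0 ∨ D q = 1 := fun q ↦
    hD q ▸ sub_mul_sub_of_binary (hXbin q.1) (hXbin q.2) (hYbin q.1) (hYbin q.2)
  have hDm : Measurable D := by rw [hD_eq]; fun_prop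
  have hτ_eq : τ = 2 * ((ℙ {ω | X ω = 1 ∧ Y ω = 1}).toReal
      - (ℙ {ω | X ω = 1}).toReal * (ℙ {ω | Y ω = 1}).toReal) :=
    calc τ = ∫ q, D q ∂(ℙ.prod ℙ) :=
          hτ.trans (measureReal_pos_sub_measureReal_neg_eq_integral hDm hD_sign)
      _ = 2 * (∫ ω, X ω * Y ω ∂ℙ - (∫ ω, X ω ∂ℙ) * ∫ ω, Y ω ∂ℙ) := by
        rw [hD_eq]
        exact integral_sub_mul_sub_prod (integrable_of_binary hX hXbin)
          (integrable_of_binary hY hYbin)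
          (integrable_of_binary (hX.mul hY) fun ω ↦ mul_eq_zero_or_one (hXbin ω) (hYbin ω))
      _ = _ := by
        rw [integral_mul_eq_measureReal_of_binary hX hY hXbin hYbin,
          integral_eq_measureReal_of_binary hX hXbin, integral_eq_measureReal_of_binary hY hYbin]
        rfl
  refine ⟨hτ_eq, ?_⟩
  rw [hτ_eq, indepFun_iff_measure_inter_eq_mul_of_binary hX hY hXbin hYbin,
    ← ENNReal.toReal_eq_toReal_iff' (measure_ne_top _ _) (by finiteness), ENNReal.toReal_mul,
    mul_eq_zero, sub_eq_zero]
  norm_num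
end

section
/- Let X, Y be discrete random variables with finite supports of sizes a ≥ 2 and b ≥ 2 and strictly positive marginal probabilities. If for every pair of bijective relabelings (s_a, s_b) of the values of X and Y into {1,…,a} and {1,…,b}, Goodman–Kruskal's gamma γ(X^{s_a}, Y^{s_b}) = 0, then X and Y are independent. -/
/-!
Write `p` for the joint law of `(X, Y)`. For numberings `sa`, `sb` the numerator of γ is
`∑ sign (sa i - sa k) * sign (sb j - sb l) * p (i, j) * p (k, l)` over pairs of cells
`(i, j)`, `(k, l)`, and it vanishes whenever the denominator `P(D ≠ 0)` does; so the hypothesis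
says that this sum is zero for all numberings.

If `σ` puts two values `x ≠ y` at the adjacent ranks `0` and `1`, exchanging these two ranks
reverses the order of the pairs `(x, y)` and `(y, x)` and of no other pair. Hence a sum
`∑ x y, sign (σ x - σ y) * g x y` that vanishes for every `σ` forces `g x y = g y x`. Used once
for the numbering of `X` and once for that of `Y`, this gives
`p (i, j) * p (k, l) = p (i, l) * p (k, j)`, and summing over `k` and `l` shows that `p` is the
product of its marginals.
-/

open MeasureTheory

/-- The concordance kernel of the numbered pair (X^{s_a}, Y^{s_b}) evaluated on a pair of
outcomes: (X^{s_a} − X̃^{s_a})(Y^{s_b} − Ỹ^{s_b}). -/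
def concKernel {Ω : Type*} {a b : ℕ} (X : Ω → Fin a) (Y : Ω → Fin b)
    (sa : Equiv.Perm (Fin a)) (sb : Equiv.Perm (Fin b)) (q : Ω × Ω) : ℝ :=
  (((sa (X q.1) : ℕ) : ℝ) - ((sa (X q.2) : ℕ) : ℝ))
    * (((sb (Y q.1) : ℕ) : ℝ) - ((sb (Y q.2) : ℕ) : ℝ))

/-- Goodman–Kruskal's gamma, computed from a concordance kernel `D` on the product space
(the independent copy construction): γ = (P(D>0) − P(D<0)) / (1 − P(D=0)). -/
noncomputable def gammaOf {Ω : Type*} [MeasurableSpace Ω] (ℙ : Measure Ω)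
    (D : Ω × Ω → ℝ) : ℝ :=
  (((ℙ.prod ℙ) {q | 0 < D q}).toReal - ((ℙ.prod ℙ) {q | D q < 0}).toReal)
    / (1 - ((ℙ.prod ℙ) {q | D q = 0}).toReal)

noncomputable def rankSign {n : ℕ} (u v : Fin n) : ℝ :=
  SignType.sign (((u : ℕ) : ℝ) - ((v : ℕ) : ℝ))

lemma rankSign_eq_ite {n : ℕ} (u v : Fin n) :
    rankSign u v = if v < u then 1 else if u < v then -1 else 0 := by
  simp only [rankSign, sign_apply, sub_pos, sub_neg, Nat.cast_lt, Fin.val_fin_lt]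
  split_ifs <;> simp

lemma rankSign_comm {n : ℕ} (u v : Fin n) : rankSign v u = -rankSign u v := by
  rw [rankSign, rankSign, ← neg_sub, Left.sign_neg, SignType.coe_neg]

lemma rankSign_swap_zero_one {n : ℕ} (h : 2 ≤ n) {u v : Fin n}
    (h₁ : ¬(u = ⟨0, by omega⟩ ∧ v = ⟨1, h⟩)) (h₂ : ¬(u = ⟨1, h⟩ ∧ v = ⟨0, by omega⟩)) :
    rankSign (Equiv.swap ⟨0, by omega⟩ ⟨1, h⟩ u) (Equiv.swap ⟨0, by omega⟩ ⟨1, h⟩ v) =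
      rankSign u v := by
  simp only [rankSign_eq_ite, Equiv.swap_apply_def]
  simp only [Fin.ext_iff, Fin.lt_def] at *
  split_ifs <;> simp_all <;> omega

lemma sum_sum_rankSign_mul_swap {n : ℕ} (σ : Equiv.Perm (Fin n)) (f : Fin n → Fin n → ℝ) :
    ∑ x, ∑ y, rankSign (σ x) (σ y) * f y x = -∑ x, ∑ y, rankSign (σ x) (σ y) * f x y := by
  rw [Finset.sum_comm, ← Finset.sum_neg_distrib]
  refine Finset.sum_congr rfl fun x _ => ?_
  rw [← Finset.sum_neg_distrib]
  exact Finset.sum_congr rfl fun y _ => by rw [rankSign_comm, neg_mul]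

lemma Equiv.Perm.exists_apply_eq_and_apply_eq {α : Type*} [DecidableEq α] {x y c d : α}
    (hxy : x ≠ y) (hcd : c ≠ d) : ∃ σ : Equiv.Perm α, σ x = c ∧ σ y = d := by
  refine ⟨Equiv.swap (Equiv.swap x c y) d * Equiv.swap x c, ?_, by simp⟩
  have : Equiv.swap x c y ≠ c := by
    simpa using (Equiv.swap x c).injective.ne hxy.symm
  simp [Equiv.swap_apply_of_ne_of_ne this.symm hcd]

lemma eq_of_forall_sum_rankSign_mul_eq_zero {n : ℕ} {g : Fin n → Fin n → ℝ}
    (h : ∀ σ : Equiv.Perm (Fin n), ∑ x, ∑ y, rankSign (σ x) (σ y) * g x y = 0)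
    {x y : Fin n} (hxy : x ≠ y) : g x y = g y x := by
  have hn : 2 ≤ n := by
    have := Fin.val_ne_of_ne hxy
    omega
  obtain ⟨σ, hσx, hσy⟩ := Equiv.Perm.exists_apply_eq_and_apply_eq hxy
    (c := ⟨0, by omega⟩) (d := ⟨1, hn⟩) (by simp [Fin.ext_iff])
  set τ : Equiv.Perm (Fin n) := Equiv.swap ⟨0, by omega⟩ ⟨1, hn⟩
  have hchange : ∀ u v, ¬(u = x ∧ v = y) → ¬(u = y ∧ v = x) →
      rankSign (τ (σ u)) (τ (σ v)) = rankSign (σ u) (σ v) := by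
    intro u v h₁ h₂
    apply rankSign_swap_zero_one <;> rwa [← hσx, ← hσy, σ.injective.eq_iff, σ.injective.eq_iff]
  have hsum : ∑ p : Fin n × Fin n,
      (rankSign (τ (σ p.1)) (τ (σ p.2)) - rankSign (σ p.1) (σ p.2)) * g p.1 p.2 = 0 := by
    have hτσ := h (τ * σ)
    simp only [Equiv.Perm.mul_apply] at hτσ
    simp only [sub_mul, Finset.sum_sub_distrib, Fintype.sum_prod_type, hτσ, h σ, sub_zero]
  rw [Fintype.sum_eq_add (x, y) (y, x) (by simp [hxy])] at hsum
  · simp only [τ, hσx, hσy, Equiv.swap_apply_left, Equiv.swap_apply_right, rankSign_eq_ite,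
      Fin.mk_lt_mk, Order.lt_one_iff, ↓reduceIte, not_lt_zero, sub_neg_eq_add] at hsum
    linarith
  · rintro ⟨u, v⟩ ⟨h₁, h₂⟩
    rw [hchange u v (by simpa using h₁) (by simpa using h₂), sub_self, zero_mul]

noncomputable def concordanceSum {a b : ℕ} (p : Fin a × Fin b → ℝ)
    (sa : Equiv.Perm (Fin a)) (sb : Equiv.Perm (Fin b)) : ℝ :=
  ∑ u, ∑ v, rankSign (sa u.1) (sa v.1) * rankSign (sb u.2) (sb v.2) * (p u * p v)

lemma mul_eq_mul_of_forall_concordanceSum_eq_zero {a b : ℕ} {p : Fin a × Fin b → ℝ}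
    (h : ∀ sa sb, concordanceSum p sa sb = 0) (i k : Fin a) (j l : Fin b) :
    p (i, j) * p (k, l) = p (i, l) * p (k, j) := by
  set g : Equiv.Perm (Fin b) → Fin a → Fin a → ℝ :=
    fun sb i k => ∑ j, ∑ l, rankSign (sb j) (sb l) * (p (i, j) * p (k, l))
  have hg : ∀ sb i k, g sb i k = 0 := by
    intro sb i k
    have hanti : g sb k i = -g sb i k := by
      simp only [g, ← sum_sum_rankSign_mul_swap, mul_comm (p (k, _))]
    obtain rfl | hik := eq_or_ne i k
    · linarith
    have hsymm : g sb i k = g sb k i := by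
      refine eq_of_forall_sum_rankSign_mul_eq_zero (fun sa => ?_) hik
      rw [← h sa sb]
      simp only [concordanceSum, g, Fintype.sum_prod_type, Finset.mul_sum, mul_assoc]
      exact Finset.sum_congr rfl fun _ _ => Finset.sum_comm
    linarith
  obtain rfl | hjl := eq_or_ne j l
  · ring
  exact eq_of_forall_sum_rankSign_mul_eq_zero (fun sb => hg sb i k) hjl

section FiniteProduct

variable {α β : Type*} [MeasurableSpace α] [MeasurableSpace β]
  [MeasurableSingletonClass α] [MeasurableSingletonClass β]

lemma measureReal_preimage_fst_singleton [Fintype β] (μ : Measure (α × β)) [IsFiniteMeasure μ]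
    (i : α) : μ.real (Prod.fst ⁻¹' {i}) = ∑ l, μ.real {(i, l)} := by
  classical
  have : Prod.fst ⁻¹' {i} = (({i} ×ˢ Finset.univ : Finset (α × β)) : Set (α × β)) := by
    ext ⟨x, y⟩; simp [eq_comm]
  rw [this, ← sum_measureReal_singleton, Finset.sum_product, Finset.sum_singleton]

lemma measureReal_preimage_snd_singleton [Fintype α] (μ : Measure (α × β)) [IsFiniteMeasure μ]
    (j : β) : μ.real (Prod.snd ⁻¹' {j}) = ∑ k, μ.real {(k, j)} := by
  classical
  have : Prod.snd ⁻¹' {j} = ((Finset.univ ×ˢ {j} : Finset (α × β)) : Set (α × β)) := by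
    ext ⟨x, y⟩; simp [eq_comm]
  rw [this, ← sum_measureReal_singleton, Finset.sum_product]
  simp

lemma eq_prod_map_fst_map_snd_of_mul_eq_mul [Fintype α] [Fintype β] (μ : Measure (α × β))
    [IsProbabilityMeasure μ]
    (h : ∀ i k j l, μ.real {(i, j)} * μ.real {(k, l)} = μ.real {(i, l)} * μ.real {(k, j)}) :
    μ = (μ.map Prod.fst).prod (μ.map Prod.snd) := by
  refine Measure.ext_of_singleton fun ⟨i, j⟩ => ?_
  rw [← measureReal_eq_measureReal_iff, ← Set.singleton_prod_singleton, measureReal_prod_prod,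
    map_measureReal_apply measurable_fst (measurableSet_singleton i),
    map_measureReal_apply measurable_snd (measurableSet_singleton j),
    measureReal_preimage_fst_singleton, measureReal_preimage_snd_singleton,
    Set.singleton_prod_singleton]
  calc μ.real {(i, j)} = μ.real {(i, j)} * ∑ k, ∑ l, μ.real {(k, l)} := by
        rw [← Fintype.sum_prod_type', sum_measureReal_singleton]; simp
    _ = (∑ l, μ.real {(i, l)}) * ∑ k, μ.real {(k, j)} := by
        simp only [Finset.mul_sum, Finset.sum_mul, h i _ j]

end FiniteProduct

lemma sum_sign_mul_measureReal_singleton {α : Type*} [Fintype α] [MeasurableSpace α]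
    [MeasurableSingletonClass α] (ν : Measure α) [IsFiniteMeasure ν] (f : α → ℝ) :
    ∑ w, (SignType.sign (f w) : ℝ) * ν.real {w} =
      ν.real {w | 0 < f w} - ν.real {w | f w < 0} := by
  classical
  rw [← Set.coe_toFinset {w | 0 < f w}, ← Set.coe_toFinset {w | f w < 0},
    ← sum_measureReal_singleton, ← sum_measureReal_singleton]
  simp only [Set.toFinset_ofPred, Finset.sum_filter, ← Finset.sum_sub_distrib]
  refine Finset.sum_congr rfl fun w _ => ?_
  rw [sign_apply]
  split_ifs <;> first | linarith | simp

lemma measureReal_prod_preimage_prodMap {Ω α : Type*} [MeasurableSpace Ω] [MeasurableSpace α]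
    (ℙ : Measure Ω) [SFinite ℙ] {Z : Ω → α} (hZ : Measurable Z) {S : Set (α × α)}
    (hS : MeasurableSet S) :
    (ℙ.prod ℙ).real (Prod.map Z Z ⁻¹' S) = ((ℙ.map Z).prod (ℙ.map Z)).real S := by
  rw [Measure.map_prod_map ℙ ℙ hZ hZ, map_measureReal_apply (hZ.prodMap hZ) hS]

lemma gammaOf_eq_zero_iff {Ω : Type*} [MeasurableSpace Ω] (ℙ : Measure Ω)
    [IsProbabilityMeasure ℙ] {D : Ω × Ω → ℝ} (hD : Measurable D) :
    gammaOf ℙ D = 0 ↔ (ℙ.prod ℙ).real {q | 0 < D q} = (ℙ.prod ℙ).real {q | D q < 0} := by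
  simp only [gammaOf, ← measureReal_def, div_eq_zero_iff, sub_eq_zero]
  refine or_iff_left_of_imp fun hzero => ?_
  have hne : (ℙ.prod ℙ).real {q | D q = 0}ᶜ = 0 := by
    rw [measureReal_compl (measurableSet_eq_fun hD measurable_const), probReal_univ]
    exact sub_eq_zero.2 hzero
  have hpos : {q | 0 < D q} ⊆ {q | D q = 0}ᶜ := fun q hq => hq.ne'
  have hneg : {q | D q < 0} ⊆ {q | D q = 0}ᶜ := fun q hq => hq.ne
  rw [measureReal_mono_null hpos hne, measureReal_mono_null hneg hne]

section ConcKernel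

variable {Ω : Type*} [MeasurableSpace Ω] {a b : ℕ} {X : Ω → Fin a} {Y : Ω → Fin b}

lemma measurable_concKernel (hX : Measurable X) (hY : Measurable Y)
    (sa : Equiv.Perm (Fin a)) (sb : Equiv.Perm (Fin b)) : Measurable (concKernel X Y sa sb) := by
  unfold concKernel
  fun_prop

lemma measureReal_concKernel_pos_sub_neg (ℙ : Measure Ω) [IsProbabilityMeasure ℙ]
    (hX : Measurable X) (hY : Measurable Y) (sa : Equiv.Perm (Fin a)) (sb : Equiv.Perm (Fin b)) :
    (ℙ.prod ℙ).real {q | 0 < concKernel X Y sa sb q} -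
        (ℙ.prod ℙ).real {q | concKernel X Y sa sb q < 0} =
      concordanceSum (fun u => (ℙ.map fun ω => (X ω, Y ω)).real {u}) sa sb := by
  set Z : Ω → Fin a × Fin b := fun ω => (X ω, Y ω)
  set κ : (Fin a × Fin b) × (Fin a × Fin b) → ℝ := fun w =>
    (((sa w.1.1 : ℕ) : ℝ) - ((sa w.2.1 : ℕ) : ℝ)) * (((sb w.1.2 : ℕ) : ℝ) - ((sb w.2.2 : ℕ) : ℝ))
  have hZ : Measurable Z := hX.prodMk hY
  rw [show {q | 0 < concKernel X Y sa sb q} = Prod.map Z Z ⁻¹' {w | 0 < κ w} from rfl,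
    show {q | concKernel X Y sa sb q < 0} = Prod.map Z Z ⁻¹' {w | κ w < 0} from rfl,
    measureReal_prod_preimage_prodMap ℙ hZ (Set.toFinite _).measurableSet,
    measureReal_prod_preimage_prodMap ℙ hZ (Set.toFinite _).measurableSet,
    ← sum_sign_mul_measureReal_singleton, concordanceSum, Fintype.sum_prod_type]
  refine Finset.sum_congr rfl fun u _ => Finset.sum_congr rfl fun v _ => ?_
  rw [← Set.singleton_prod_singleton, measureReal_prod_prod, sign_mul, SignType.coe_mul]
  rfl

end ConcKernel

theorem gamma_zero_all_numberings_implies_indep_general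
    {Ω : Type*} [MeasurableSpace Ω] (ℙ : Measure Ω) [IsProbabilityMeasure ℙ]
    (a b : ℕ)
    (X : Ω → Fin a) (Y : Ω → Fin b) (hX : Measurable X) (hY : Measurable Y)
    (hγ : ∀ (sa : Equiv.Perm (Fin a)) (sb : Equiv.Perm (Fin b)),
      gammaOf ℙ (concKernel X Y sa sb) = 0) :
    ProbabilityTheory.IndepFun X Y ℙ := by
  have hZ : Measurable fun ω => (X ω, Y ω) := hX.prodMk hY
  set μ := ℙ.map fun ω => (X ω, Y ω)
  have hconc : ∀ sa sb, concordanceSum (fun u => μ.real {u}) sa sb = 0 := fun sa sb => by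
    rw [← measureReal_concKernel_pos_sub_neg ℙ hX hY, sub_eq_zero]
    exact (gammaOf_eq_zero_iff ℙ (measurable_concKernel hX hY sa sb)).1 (hγ sa sb)
  have : IsProbabilityMeasure μ := Measure.isProbabilityMeasure_map hZ.aemeasurable
  rw [ProbabilityTheory.indepFun_iff_map_prod_eq_prod_map_map hX.aemeasurable hY.aemeasurable]
  refine (eq_prod_map_fst_map_snd_of_mul_eq_mul μ
    (mul_eq_mul_of_forall_concordanceSum_eq_zero hconc)).trans ?_
  rw [Measure.map_map measurable_fst hZ, Measure.map_map measurable_snd hZ]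
  rfl

/-- If Goodman–Kruskal's gamma vanishes for every pair of bijective
relabelings of the values of X and Y, then X and Y are independent. -/
theorem gamma_zero_all_numberings_implies_indep
    {Ω : Type*} [MeasurableSpace Ω] (ℙ : Measure Ω) [IsProbabilityMeasure ℙ]
    (a b : ℕ) (ha : 2 ≤ a) (hb : 2 ≤ b)
    (X : Ω → Fin a) (Y : Ω → Fin b) (hX : Measurable X) (hY : Measurable Y)
    (hXpos : ∀ i, 0 < (ℙ {ω | X ω = i}).toReal)
    (hYpos : ∀ j, 0 < (ℙ {ω | Y ω = j}).toReal)
    (hγ : ∀ (sa : Equiv.Perm (Fin a)) (sb : Equiv.Perm (Fin b)),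
      gammaOf ℙ (concKernel X Y sa sb) = 0) :
    ProbabilityTheory.IndepFun X Y ℙ :=
  gamma_zero_all_numberings_implies_indep_general ℙ a b X Y hX hY hγ
end

section
/- Let X take finitely many values ω'_1,…,ω'_a and Y be real-valued, and suppose Y = b_1 + Σ_{j=2}^a b_j · 1{X = ω'_j} + U almost surely, where U is independent of X and non-degenerate. Then X and Y are independent if and only if b_j = 0 for all j ∈ {2,…,a}. -/
open MeasureTheory Filter Topology

/-!
The law of `Y` given `X = k` is the law of `U` translated by the regression value at `k`. If `Y`
is independent of `X`, all these conditional laws equal the law of `Y`, so the distribution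
function of `U` is periodic with period the difference of any two regression values. A
distribution function tends to `0` at `-∞` and to `1` at `+∞`, so it has no nonzero period:
all regression values coincide, i.e. every slope vanishes.
-/

theorem Function.Periodic.eq_of_tendsto_atTop {β : Type*} [TopologicalSpace β] [T2Space β]
    {f : ℝ → β} {c : ℝ} (hf : Function.Periodic f c) (hc : c ≠ 0) {l : β}
    (hl : Tendsto f atTop (𝓝 l)) (x : ℝ) : f x = l := by
  wlog hc_pos : 0 < c generalizing c
  · exact this hf.neg (neg_ne_zero.2 hc) (neg_pos.2 (hc.lt_or_gt.resolve_right hc_pos))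
  have h_to_top : Tendsto (fun n : ℕ => x + n * c) atTop atTop :=
    tendsto_atTop_add_const_left _ x
      (tendsto_natCast_atTop_atTop.atTop_mul_const hc_pos)
  have h_lim : Tendsto (fun n : ℕ => f (x + n * c)) atTop (𝓝 l) := hl.comp h_to_top
  simp only [hf.nat_mul _ x] at h_lim
  exact tendsto_nhds_unique tendsto_const_nhds h_lim

theorem ProbabilityTheory.cdf_not_periodic (μ : Measure ℝ) [IsProbabilityMeasure μ] {c : ℝ}
    (hc : c ≠ 0) : ¬ Function.Periodic (cdf μ) c := by
  intro hper
  have h_one : cdf μ 0 = 1 := hper.eq_of_tendsto_atTop hc (tendsto_cdf_atTop μ) 0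
  have h_reflected_per : Function.Periodic (fun x => cdf μ (-x)) c := fun x => by
    simpa only [neg_add] using hper.neg (-x)
  have h_zero : cdf μ (-0) = 0 :=
    h_reflected_per.eq_of_tendsto_atTop hc ((tendsto_cdf_atBot μ).comp tendsto_neg_atTop_atBot) 0
  simp [h_one] at h_zero

theorem Finset.sum_filter_ne_mul_ite_eq {ι R : Type*} [Fintype ι] [DecidableEq ι] [Semiring R]
    (b : ι → R) (z k : ι) :
    ∑ j ∈ Finset.univ.filter (fun j => j ≠ z), b j * (if k = j then 1 else 0) =
      if k = z then 0 else b k := by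
  simp only [mul_ite, mul_one, mul_zero, Finset.sum_ite_eq, Finset.mem_filter,
    Finset.mem_univ, true_and, ite_not]

namespace ProbabilityTheory

variable {Ω α : Type*} [MeasurableSpace Ω] {μ : Measure Ω} [MeasurableSpace α]
  [MeasurableSingletonClass α] {X : Ω → α} {U : Ω → ℝ}

theorem measure_add_comp_le_eq_of_indepFun [IsFiniteMeasure μ] (hXU : IndepFun X U μ)
    {f : α → ℝ} (hXY : IndepFun X (fun ω => f (X ω) + U ω) μ) {k : α}
    (hk : μ {ω | X ω = k} ≠ 0) (t : ℝ) :
    μ {ω | f (X ω) + U ω ≤ t} = μ {ω | U ω ≤ t - f k} := by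
  have h_slice : {ω | X ω = k} ∩ {ω | f (X ω) + U ω ≤ t} =
      {ω | X ω = k} ∩ {ω | U ω ≤ t - f k} := by
    ext ω
    refine and_congr_right fun hω => ?_
    show f (X ω) + U ω ≤ t ↔ U ω ≤ t - f k
    rw [hω, le_sub_iff_add_le']
  have hY_slice := hXY.measure_inter_preimage_eq_mul {k} (Set.Iic t)
    (measurableSet_singleton k) measurableSet_Iic
  have hU_slice := hXU.measure_inter_preimage_eq_mul {k} (Set.Iic (t - f k))
    (measurableSet_singleton k) measurableSet_Iic
  simp only [Set.preimage, Set.mem_singleton_iff, Set.mem_Iic] at hY_slice hU_slice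
  rw [h_slice, hU_slice] at hY_slice
  exact ((ENNReal.mul_right_inj hk (measure_ne_top _ _)).mp hY_slice).symm

theorem periodic_cdf_map_of_indepFun_add_comp [IsProbabilityMeasure μ] (hU : Measurable U)
    (hXU : IndepFun X U μ) {f : α → ℝ} (hXY : IndepFun X (fun ω => f (X ω) + U ω) μ)
    {j k : α} (hj : μ {ω | X ω = j} ≠ 0) (hk : μ {ω | X ω = k} ≠ 0) :
    Function.Periodic (cdf (μ.map U)) (f k - f j) := by
  have := Measure.isProbabilityMeasure_map (μ := μ) hU.aemeasurable
  intro s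
  have h_shift : μ {ω | U ω ≤ s + (f k - f j)} = μ {ω | U ω ≤ s} := by
    have hj' := measure_add_comp_le_eq_of_indepFun hXU hXY hj (s + f k)
    have hk' := measure_add_comp_le_eq_of_indepFun hXU hXY hk (s + f k)
    rw [add_sub_cancel_right] at hk'
    rw [← hk', hj', add_sub_assoc]
  simp only [cdf_eq_real, map_measureReal_apply hU measurableSet_Iic, measureReal_def]
  exact congrArg ENNReal.toReal h_shift

theorem indepFun_add_comp_iff [IsProbabilityMeasure μ] (hU : Measurable U)
    (hXU : IndepFun X U μ) (hpos : ∀ k, μ {ω | X ω = k} ≠ 0) (f : α → ℝ) :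
    IndepFun X (fun ω => f (X ω) + U ω) μ ↔ ∀ j k, f j = f k := by
  constructor
  · intro hXY j k
    by_contra hne
    have := Measure.isProbabilityMeasure_map (μ := μ) hU.aemeasurable
    exact cdf_not_periodic _ (sub_ne_zero.2 (Ne.symm hne))
      (periodic_cdf_map_of_indepFun_add_comp hU hXU hXY (hpos j) (hpos k))
  · intro hf
    obtain ⟨ω₀⟩ := nonempty_of_isProbabilityMeasure μ
    have h_const : (fun ω => f (X ω) + U ω) = fun ω => f (X ω₀) + U ω :=
      funext fun ω => by rw [hf (X ω) (X ω₀)]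
    rw [h_const]
    exact hXU.comp measurable_id (measurable_const_add _)

end ProbabilityTheory

theorem indep_iff_slopes_zero_general
    {Ω : Type*} [MeasurableSpace Ω] (ℙ : Measure Ω) [IsProbabilityMeasure ℙ]
    (a : ℕ) (ha : 0 < a)
    (X : Ω → Fin a) (U : Ω → ℝ) (Y : Ω → ℝ)
    (hU : Measurable U)
    (hpos : ∀ j, ℙ {ω | X ω = j} ≠ 0)
    (hindep : ProbabilityTheory.IndepFun X U ℙ)
    (b : Fin a → ℝ)
    (hY : ∀ᵐ ω ∂ℙ, Y ω = b ⟨0, ha⟩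
        + (∑ j ∈ Finset.univ.filter (fun j => j ≠ (⟨0, ha⟩ : Fin a)),
            b j * (if X ω = j then 1 else 0))
        + U ω) :
    ProbabilityTheory.IndepFun X Y ℙ ↔ ∀ j, j ≠ (⟨0, ha⟩ : Fin a) → b j = 0 := by
  set z : Fin a := ⟨0, ha⟩
  let β (k : Fin a) : ℝ :=
    b z + ∑ j ∈ Finset.univ.filter (fun j => j ≠ z), b j * (if k = j then 1 else 0)
  have hYβ : Y =ᵐ[ℙ] fun ω => β (X ω) + U ω := hY
  have hY_indep : ProbabilityTheory.IndepFun X Y ℙ ↔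
      ProbabilityTheory.IndepFun X (fun ω => β (X ω) + U ω) ℙ :=
    ⟨fun h => h.congr .rfl hYβ, fun h => h.congr .rfl hYβ.symm⟩
  rw [hY_indep, ProbabilityTheory.indepFun_add_comp_iff hU hindep hpos]
  simp only [β, Finset.sum_filter_ne_mul_ite_eq, add_right_inj]
  constructor
  · intro h j hj
    simpa [hj] using h j z
  · intro h j k
    have h_slope_zero : ∀ i, (if i = z then 0 else b i) = 0 := fun i => by
      split_ifs with hi
      exacts [rfl, h i hi]
    rw [h_slope_zero, h_slope_zero]

/-- In the regression Y = b₁ + Σ_{j≥2} b_j 1{X = ω'_j} + U a.s. with U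
independent of X and non-degenerate, X and Y are independent iff all slope coefficients
b_j (j ≥ 2) vanish. -/
theorem indep_iff_slopes_zero
    {Ω : Type*} [MeasurableSpace Ω] (ℙ : Measure Ω) [IsProbabilityMeasure ℙ]
    (a : ℕ) (ha : 0 < a)
    (X : Ω → Fin a) (U : Ω → ℝ) (Y : Ω → ℝ)
    (hX : Measurable X) (hU : Measurable U) (hYm : Measurable Y)
    (hpos : ∀ j, ℙ {ω | X ω = j} ≠ 0)
    (hindep : ProbabilityTheory.IndepFun X U ℙ)
    (hnondeg : ¬ ∃ c : ℝ, ∀ᵐ ω ∂ℙ, U ω = c)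
    (b : Fin a → ℝ)
    (hY : ∀ᵐ ω ∂ℙ, Y ω = b ⟨0, ha⟩
        + (∑ j ∈ Finset.univ.filter (fun j => j ≠ (⟨0, ha⟩ : Fin a)),
            b j * (if X ω = j then 1 else 0))
        + U ω) :
    ProbabilityTheory.IndepFun X Y ℙ ↔ ∀ j, j ≠ (⟨0, ha⟩ : Fin a) → b j = 0 :=
  indep_iff_slopes_zero_general ℙ a ha X U Y hU hpos hindep b hY
end
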